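/- Let C be a monoidal category, (C₀, Δ, ε) a comonoid in C, (X, ρ_X) a right C₀-comodule, and Y an object such that E := cohom(X,Y) exists with coevaluation coev : X ⟶ Y ⊗ E. Let ρ^r : E ⟶ E ⊗ C₀ be the unique morphism with (id_Y ⊗ ρ^r) ∘ coev = α_{Y,E,C₀} ∘ (coev ⊗ id_{C₀}) ∘ ρ_X. Then ρ^r is a right C₀-comodule coaction on E: α ∘ (ρ^r ⊗ id_{C₀}) ∘ ρ^r = (id_E ⊗ Δ) ∘ ρ^r and (id_E ⊗ ε) ∘ ρ^r equals the inverse right unitor of E. -/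

import Mathlib

open CategoryTheory MonoidalCategory

/-!
Morphisms out of `E` are determined by their transposes, i.e. by their composite with
`coev` after whiskering by `Y`. Transposing both sides of each comodule axiom for `ρr`
and using the defining equation of `ρr` (with naturality of the associator and the
pentagon) turns them into the corresponding axioms for `ρX`.
-/

namespace CategoryTheory.MonoidalCategory

variable {C : Type*} [Category C] [MonoidalCategory C]

theorem eq_of_coev_whiskerLeft_eq {X Y E W : C} {coev : X ⟶ Y ⊗ E}
    (huniv : ∀ (W : C) (φ : X ⟶ Y ⊗ W), ∃! f : E ⟶ W, coev ≫ (Y ◁ f) = φ)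
    {f g : E ⟶ W} (h : coev ≫ (Y ◁ f) = coev ≫ (Y ◁ g)) : f = g :=
  (huniv W _).unique h rfl

section TransposedCoaction

variable {M X Y E : C} {coev : X ⟶ Y ⊗ E} {ρX : X ⟶ X ⊗ M} {ρr : E ⟶ E ⊗ M}

theorem coev_whiskerLeft_coaction_comp_whiskerLeft
    (hρr : coev ≫ (Y ◁ ρr) = ρX ≫ (coev ▷ M) ≫ (α_ Y E M).hom) {D : C} (g : M ⟶ D) :
    coev ≫ (Y ◁ (ρr ≫ (E ◁ g))) = ρX ≫ (X ◁ g) ≫ (coev ▷ D) ≫ (α_ Y E D).hom := by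
  rw [whiskerLeft_comp, reassoc_of% hρr, ← associator_naturality_right,
    whisker_exchange_assoc]

theorem coev_whiskerLeft_coaction_comp_coaction_whiskerRight
    (hρr : coev ≫ (Y ◁ ρr) = ρX ≫ (coev ▷ M) ≫ (α_ Y E M).hom) :
    coev ≫ (Y ◁ (ρr ≫ (ρr ▷ M) ≫ (α_ E M M).hom)) =
      ρX ≫ (ρX ▷ M) ≫ (α_ X M M).hom ≫ (coev ▷ (M ⊗ M)) ≫ (α_ Y E (M ⊗ M)).hom := by
  calc coev ≫ (Y ◁ (ρr ≫ (ρr ▷ M) ≫ (α_ E M M).hom))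
      = ρX ≫ ((coev ≫ (Y ◁ ρr)) ▷ M) ≫ (α_ Y (E ⊗ M) M).hom ≫
          (Y ◁ (α_ E M M).hom) := by
        simp only [whiskerLeft_comp, reassoc_of% hρr, comp_whiskerRight, Category.assoc,
          associator_naturality_middle_assoc]
    _ = ρX ≫ (ρX ▷ M) ≫ ((coev ▷ M) ▷ M) ≫ (α_ (Y ⊗ E) M M).hom ≫
          (α_ Y E (M ⊗ M)).hom := by
        simp only [hρr, comp_whiskerRight, Category.assoc, pentagon]
    _ = ρX ≫ (ρX ▷ M) ≫ (α_ X M M).hom ≫ (coev ▷ (M ⊗ M)) ≫ (α_ Y E (M ⊗ M)).hom := by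
        rw [associator_naturality_left_assoc]

end TransposedCoaction

end CategoryTheory.MonoidalCategory

theorem stmt11_general {C : Type*} [Category C] [MonoidalCategory C]
    (C₀ : C) (Δ : C₀ ⟶ C₀ ⊗ C₀) (ε : C₀ ⟶ 𝟙_ C)
    (X : C) (ρX : X ⟶ X ⊗ C₀)
    (hρX_coassoc : ρX ≫ (ρX ▷ C₀) ≫ (α_ X C₀ C₀).hom = ρX ≫ (X ◁ Δ))
    (hρX_counit : ρX ≫ (X ◁ ε) = (ρ_ X).inv)
    (Y E : C) (coev : X ⟶ Y ⊗ E)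
    (huniv : ∀ (W : C) (φ : X ⟶ Y ⊗ W), ∃! f : E ⟶ W, coev ≫ (Y ◁ f) = φ)
    (ρr : E ⟶ E ⊗ C₀)
    (hρr : coev ≫ (Y ◁ ρr) = ρX ≫ (coev ▷ C₀) ≫ (α_ Y E C₀).hom) :
    ρr ≫ (ρr ▷ C₀) ≫ (α_ E C₀ C₀).hom = ρr ≫ (E ◁ Δ) ∧
    ρr ≫ (E ◁ ε) = (ρ_ E).inv := by
  constructor
  · apply eq_of_coev_whiskerLeft_eq huniv
    rw [coev_whiskerLeft_coaction_comp_coaction_whiskerRight hρr, reassoc_of% hρX_coassoc,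
      coev_whiskerLeft_coaction_comp_whiskerLeft hρr]
  · apply eq_of_coev_whiskerLeft_eq huniv
    rw [coev_whiskerLeft_coaction_comp_whiskerLeft hρr, reassoc_of% hρX_counit,
      ← rightUnitor_inv_naturality_assoc, whiskerLeft_rightUnitor_inv]

/-- Let `(C₀, Δ, ε)` be a comonoid in a monoidal category, `(X, ρX)` a
right `C₀`-comodule, and `Y` an object such that `E := cohom(X,Y)` exists with
coevaluation `coev : X ⟶ Y ⊗ E` (universal property `huniv`).  Let `ρr : E ⟶ E ⊗ C₀`
be the (unique) morphism with `(id_Y ⊗ ρr) ∘ coev = α ∘ (coev ⊗ id) ∘ ρX`.  Then `ρr`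
is a right `C₀`-comodule coaction on `E`. -/
theorem stmt11 {C : Type*} [Category C] [MonoidalCategory C]
    (C₀ : C) (Δ : C₀ ⟶ C₀ ⊗ C₀) (ε : C₀ ⟶ 𝟙_ C)
    (hΔ : Δ ≫ (Δ ▷ C₀) ≫ (α_ C₀ C₀ C₀).hom = Δ ≫ (C₀ ◁ Δ))
    (hεl : Δ ≫ (ε ▷ C₀) = (λ_ C₀).inv)
    (hεr : Δ ≫ (C₀ ◁ ε) = (ρ_ C₀).inv)
    (X : C) (ρX : X ⟶ X ⊗ C₀)
    (hρX_coassoc : ρX ≫ (ρX ▷ C₀) ≫ (α_ X C₀ C₀).hom = ρX ≫ (X ◁ Δ))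
    (hρX_counit : ρX ≫ (X ◁ ε) = (ρ_ X).inv)
    (Y E : C) (coev : X ⟶ Y ⊗ E)
    (huniv : ∀ (W : C) (φ : X ⟶ Y ⊗ W), ∃! f : E ⟶ W, coev ≫ (Y ◁ f) = φ)
    (ρr : E ⟶ E ⊗ C₀)
    (hρr : coev ≫ (Y ◁ ρr) = ρX ≫ (coev ▷ C₀) ≫ (α_ Y E C₀).hom) :
    ρr ≫ (ρr ▷ C₀) ≫ (α_ E C₀ C₀).hom = ρr ≫ (E ◁ Δ) ∧
    ρr ≫ (E ◁ ε) = (ρ_ E).inv :=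
  stmt11_general C₀ Δ ε X ρX hρX_coassoc hρX_counit Y E coev huniv ρr hρr
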